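/- arXiv:1903.01109 — 4 statements merged into one kernel-verified Lean document; each statement's English description precedes it below -/
import Mathlib

section
/- Let n be a positive integer and s = (s₁, s₂) ∈ ℤ² with s₁ - s₂ > n - 1. For bipartitions λ, μ of n, the boundary-sequence order λ ⪯_s μ coincides with the lexicographic order λ ≤ μ (where bipartitions are compared lexicographically: first compare λ¹ and μ¹ part by part, and if λ¹ = μ¹ compare λ² and μ² part by part). -/
/-!
Combinatorics of Uglov bipartitions (N. Jacon, "Uglov bipartitions and extended
Young diagrams").  Nodes are triples `(a, b, c)`: row `a`, column `b`, component
`c : Fin 2` (`c = 0` is component 1, `c = 1` is component 2).  The parameter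
`e : ℕ` encodes `e ∈ ℤ_{>1} ∪ {∞}` with `e = 0` standing for `e = ∞`
(then `ZMod 0 = ℤ` and the residue is just the content); so the condition
`e ∈ ℤ_{>1} ∪ {∞}` reads `e ≠ 1`.
-/

abbrev UgNode := ℕ × ℕ × Fin 2

def nrow (γ : UgNode) : ℕ := γ.1
def ncol (γ : UgNode) : ℕ := γ.2.1
def ncomp (γ : UgNode) : Fin 2 := γ.2.2

/-- A bipartition, given by its parts `p c a` (the `a`-th part of component `c`,
rows indexed by `a ≥ 1`; `p c 0 = 0` is a dummy value). -/
structure Bipartition where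
  p : Fin 2 → ℕ → ℕ
  p_zero : ∀ c, p c 0 = 0
  anti : ∀ c a b, 1 ≤ a → a ≤ b → p c b ≤ p c a
  fin : ∀ c, ∃ N, ∀ a, N ≤ a → p c a = 0

namespace Bipartition

/-- The rank `|λ¹| + |λ²|`. -/
noncomputable def rank (l : Bipartition) : ℕ := ∑' a : ℕ, (l.p 0 a + l.p 1 a)

/-- Membership in the Young diagram. -/
def Mem (l : Bipartition) (γ : UgNode) : Prop :=
  1 ≤ nrow γ ∧ 1 ≤ ncol γ ∧ ncol γ ≤ l.p (ncomp γ) (nrow γ)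

/-- Membership in the extended Young diagram: the Young diagram together with
the virtual nodes `(0,b,c)` for `b > λᶜ₁` and `(a,0,c)` for `a > ℓ(λᶜ)`. -/
def MemExt (l : Bipartition) (γ : UgNode) : Prop :=
  l.Mem γ ∨ (nrow γ = 0 ∧ l.p (ncomp γ) 1 < ncol γ)
    ∨ (ncol γ = 0 ∧ 1 ≤ nrow γ ∧ l.p (ncomp γ) (nrow γ) = 0)

/-- Vertical boundary: `(a,b+1,c)` is not in the extended diagram. -/
def VertBoundary (l : Bipartition) (γ : UgNode) : Prop :=
  l.MemExt γ ∧ ¬ l.MemExt (nrow γ, ncol γ + 1, ncomp γ)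

/-- Horizontal boundary: `(a+1,b,c)` is not in the extended diagram. -/
def HorizBoundary (l : Bipartition) (γ : UgNode) : Prop :=
  l.MemExt γ ∧ ¬ l.MemExt (nrow γ + 1, ncol γ, ncomp γ)

def Boundary (l : Bipartition) (γ : UgNode) : Prop :=
  l.VertBoundary γ ∨ l.HorizBoundary γ

/-- Removable node of the Young diagram. -/
def Removable (l : Bipartition) (γ : UgNode) : Prop :=
  1 ≤ nrow γ ∧ 1 ≤ ncol γ ∧ ncol γ = l.p (ncomp γ) (nrow γ) ∧
    l.p (ncomp γ) (nrow γ + 1) < ncol γ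

/-- Addable node. -/
def Addable (l : Bipartition) (γ : UgNode) : Prop :=
  1 ≤ nrow γ ∧ ncol γ = l.p (ncomp γ) (nrow γ) + 1 ∧
    (nrow γ = 1 ∨ ncol γ ≤ l.p (ncomp γ) (nrow γ - 1))

def emptyBp : Bipartition where
  p _ _ := 0
  p_zero _ := rfl
  anti _ _ _ _ _ := le_refl 0
  fin _ := ⟨0, fun _ _ => rfl⟩

/-- `m` is obtained from `l` by adding the node `γ`. -/
def IsAddOf (l m : Bipartition) (γ : UgNode) : Prop :=
  l.Addable γ ∧ ∀ c a, m.p c a =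
    if c = ncomp γ ∧ a = nrow γ then l.p c a + 1 else l.p c a

/-- `l'` is obtained from `l` by removing the set `S` of removable nodes. -/
def IsRemoveSetOf (l l' : Bipartition) (S : Set UgNode) : Prop :=
  (∀ γ ∈ S, l.Removable γ) ∧
  ∀ (c : Fin 2) (a : ℕ),
    (((a, l.p c a, c) : UgNode) ∈ S → l'.p c a = l.p c a - 1) ∧
    (((a, l.p c a, c) : UgNode) ∉ S → l'.p c a = l.p c a)

/-- Exchange of the two components. -/
def swap (l : Bipartition) : Bipartition where
  p c := l.p (1 - c)
  p_zero _ := l.p_zero _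
  anti _ := l.anti _
  fin _ := l.fin _

end Bipartition

/-- Content `b - a + s_c` of the node `(a,b,c)`, for the multicharge `s`. -/
def cont (s : Fin 2 → ℤ) (γ : UgNode) : ℤ := (ncol γ : ℤ) - (nrow γ : ℤ) + s (ncomp γ)

/-- Residue: the content modulo `e` (the content itself if `e = 0`, i.e. `e = ∞`). -/
def res (e : ℕ) (s : Fin 2 → ℤ) (γ : UgNode) : ZMod e := (cont s γ : ZMod e)

/-- The order `<ₛ` on nodes: smaller content, or equal contents with the first node
in component 2 and the second in component 1. -/
def nlt (s : Fin 2 → ℤ) (γ η : UgNode) : Prop :=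
  cont s γ < cont s η ∨ (cont s γ = cont s η ∧ ncomp γ = 1 ∧ ncomp η = 0)

/-- Nature of an addable-or-boundary node: addable, removable, vertical-boundary
non-removable, horizontal-boundary non-removable. -/
inductive Nature
  | A
  | R
  | Bv
  | Bh

def HasNature (l : Bipartition) (γ : UgNode) : Nature → Prop
  | Nature.A => l.Addable γ
  | Nature.R => l.Removable γ
  | Nature.Bv => l.VertBoundary γ ∧ ¬ l.Removable γ
  | Nature.Bh => l.HorizBoundary γ ∧ ¬ l.Removable γ

/-- `g` enumerates the vertical boundary of `l` in (strictly) decreasing `<ₛ` order: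
the boundary sequence of `l`. -/
def IsBoundarySeq (s : Fin 2 → ℤ) (l : Bipartition) (g : ℕ → UgNode) : Prop :=
  (∀ i, l.VertBoundary (g i)) ∧ (∀ γ, l.VertBoundary γ → ∃ i, g i = γ) ∧
    ∀ i, nlt s (g (i + 1)) (g i)

/-- The order `⪯ₛ` on bipartitions, via boundary sequences. -/
def ble (s : Fin 2 → ℤ) (l m : Bipartition) : Prop :=
  l = m ∨ ∀ g h, IsBoundarySeq s l g → IsBoundarySeq s m h →
    ∃ j, (∀ i, i < j → g i = h i) ∧ nlt s (g j) (h j)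

/-- Lexicographic order on bipartitions: compare `λ¹` with `μ¹` part by part,
then (if equal) `λ²` with `μ²`. -/
def bplex (l m : Bipartition) : Prop :=
  l = m ∨
  (∃ j, 1 ≤ j ∧ (∀ i, 1 ≤ i → i < j → l.p 0 i = m.p 0 i) ∧ l.p 0 j < m.p 0 j) ∨
  ((∀ i, l.p 0 i = m.p 0 i) ∧
    ∃ j, 1 ≤ j ∧ (∀ i, 1 ≤ i → i < j → l.p 1 i = m.p 1 i) ∧ l.p 1 j < m.p 1 j)

/-- The multicharge `(s₁, s₂)` attached to natural numbers `s₁, s₂`. -/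
def charge (s₁ s₂ : ℕ) : Fin 2 → ℤ := fun c => if c = 0 then (s₁ : ℤ) else (s₂ : ℤ)

/-- FLOTW condition (1): `λ¹ᵢ ≥ λ²_{i+s₂-s₁}` and `λ²ᵢ ≥ λ¹_{i+e+s₁-s₂}`. -/
def Flotw1 (e s₁ s₂ : ℕ) (l : Bipartition) : Prop :=
  ∀ i, 1 ≤ i → l.p 1 (i + (s₂ - s₁)) ≤ l.p 0 i ∧ l.p 0 (i + (e + s₁ - s₂)) ≤ l.p 1 i

/-- FLOTW condition (2): for every part size `k > 0`, the residues of the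
vertical-boundary nodes `(a, λᶜ_a, c)` with `λᶜ_a = k` omit some residue class. -/
def Flotw2 (e s₁ s₂ : ℕ) (l : Bipartition) : Prop :=
  ∀ k, 0 < k → ∃ r : ZMod e, ∀ a, 1 ≤ a → ∀ c : Fin 2,
    l.p c a = k → res e (charge s₁ s₂) ((a, k, c) : UgNode) ≠ r

def IsFlotw (e s₁ s₂ : ℕ) (l : Bipartition) : Prop :=
  Flotw1 e s₁ s₂ l ∧ Flotw2 e s₁ s₂ l

/-- A period: `e` vertical-boundary nodes with consecutive contents and weakly
increasing components. -/
def HasPeriod (e : ℕ) (s : Fin 2 → ℤ) (l : Bipartition) : Prop :=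
  ∃ g : ℕ → UgNode, (∀ i, i < e → l.VertBoundary (g i)) ∧
    ∀ i, i + 1 < e → cont s (g (i + 1)) = cont s (g i) + 1 ∧ ncomp (g i) ≤ ncomp (g (i + 1))

/-- `(1)`-connection of two removable nodes `γ <ₛ γ'` of the same residue:
removing `γ'` creates a period. -/
def Conn1 (e : ℕ) (s : Fin 2 → ℤ) (l : Bipartition) (γ γ' : UgNode) : Prop :=
  l.Removable γ ∧ l.Removable γ' ∧ nlt s γ γ' ∧ res e s γ = res e s γ' ∧
    ∀ l' : Bipartition, Bipartition.IsAddOf l' l γ' → HasPeriod e s l'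

/-- `(2)`-connection, via the FLOTW equalities. -/
def Conn2 (e s₁ s₂ : ℕ) (l : Bipartition) (γ γ' : UgNode) : Prop :=
  (l.Removable γ ∧ ncomp γ = 0 ∧ l.p 0 (nrow γ) = l.p 1 (nrow γ + (s₂ - s₁)) ∧
    γ' = ((nrow γ + (s₂ - s₁), l.p 1 (nrow γ + (s₂ - s₁)), (1 : Fin 2)) : UgNode)) ∨
  (l.Removable γ ∧ ncomp γ = 1 ∧ l.p 1 (nrow γ) = l.p 0 (nrow γ + (e + s₁ - s₂)) ∧
    γ' = ((nrow γ + (e + s₁ - s₂), l.p 0 (nrow γ + (e + s₁ - s₂)), (0 : Fin 2)) : UgNode))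

/-- `(1)`- or `(2)`-connected, in either direction. -/
def Conn (e s₁ s₂ : ℕ) (l : Bipartition) (γ γ' : UgNode) : Prop :=
  Conn1 e (charge s₁ s₂) l γ γ' ∨ Conn1 e (charge s₁ s₂) l γ' γ ∨
    Conn2 e s₁ s₂ l γ γ' ∨ Conn2 e s₁ s₂ l γ' γ

/-- Equivalence: transitive closure of the connection relation. -/
def ConnCl (e s₁ s₂ : ℕ) (l : Bipartition) : UgNode → UgNode → Prop :=
  Relation.ReflTransGen (Conn e s₁ s₂ l)

/-- Letters of the addable/removable word. -/
inductive Letter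
  | A
  | R

/-- `w` is the word of addable (`A`) and removable (`R`) `j`-nodes of `l`, read in
increasing `<ₛ` order. -/
def IsSortedWord (e : ℕ) (s : Fin 2 → ℤ) (j : ZMod e) (l : Bipartition)
    (w : List (Letter × UgNode)) : Prop :=
  w.Chain' (fun x y => nlt s x.2 y.2) ∧
  ∀ γ : UgNode,
    ((Letter.A, γ) ∈ w ↔ l.Addable γ ∧ res e s γ = j) ∧
    ((Letter.R, γ) ∈ w ↔ l.Removable γ ∧ res e s γ = j)

/-- One cancellation step: delete a removable node immediately followed by an
addable node. -/
def Step (w w' : List (Letter × UgNode)) : Prop :=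
  ∃ xs ys γ η, w = xs ++ (Letter.R, γ) :: (Letter.A, η) :: ys ∧ w' = xs ++ ys

/-- No cancellation step applies. -/
def Reduced (w : List (Letter × UgNode)) : Prop := ∀ w', ¬ Step w w'

/-- `γ` is a normal `j`-node of `l`: a removable node surviving the cancellation. -/
def NormalNode (e : ℕ) (s : Fin 2 → ℤ) (j : ZMod e) (l : Bipartition) (γ : UgNode) : Prop :=
  ∃ w w', IsSortedWord e s j l w ∧ Relation.ReflTransGen Step w w' ∧ Reduced w' ∧
    (Letter.R, γ) ∈ w'

/-- `γ` is the good `j`-node of `l`: the rightmost surviving addable node. -/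
def GoodAddable (e : ℕ) (s : Fin 2 → ℤ) (j : ZMod e) (l : Bipartition) (γ : UgNode) : Prop :=
  ∃ w w', IsSortedWord e s j l w ∧ Relation.ReflTransGen Step w w' ∧ Reduced w' ∧
    (Letter.A, γ) ∈ w' ∧ ∀ η, (Letter.A, η) ∈ w' → η = γ ∨ nlt s η γ

/-- Uglov bipartitions of rank `n` for `(e, s)`, defined recursively by adding
good nodes starting from the empty bipartition. -/
def IsUglov (e : ℕ) (s : Fin 2 → ℤ) : ℕ → Bipartition → Prop
  | 0 => fun l => l = Bipartition.emptyBp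
  | n + 1 => fun l => ∃ m γ j, IsUglov e s n m ∧ GoodAddable e s j m γ ∧
      Bipartition.IsAddOf m l γ

/-- The one-row bipartition `((n), ∅)`. -/
def rowBp (n : ℕ) : Bipartition where
  p c a := if c = 0 ∧ a = 1 then n else 0
  p_zero c := by simp
  anti c a b ha hab := by
    by_cases h : c = 0 ∧ b = 1
    · have ha1 : a = 1 := le_antisymm (h.2 ▸ hab) ha
      simp [h, ha1, h.1]
    · simp [h]
  fin c := ⟨2, fun a ha => by
    have : a ≠ 1 := by omega
    simp [this]⟩

namespace UgPf
open Bipartition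

lemma bp_ext {l m : Bipartition} (h : ∀ c a, l.p c a = m.p c a) : l = m := by
  cases l; cases m
  have : ∀ {f g : Fin 2 → ℕ → ℕ}, (∀ c a, f c a = g c a) → f = g :=
    fun h => funext fun c => funext fun a => h c a
  simp only [Bipartition.mk.injEq]
  exact this h

lemma vb_iff {l : Bipartition} {γ : UgNode} :
    l.VertBoundary γ ↔ ∃ a c, 1 ≤ a ∧ γ = (a, l.p c a, c) := by
  obtain ⟨a, b, c⟩ := γ
  constructor
  · rintro ⟨hmem, hnot⟩
    refine ⟨a, c, ?_, ?_⟩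
    · rcases hmem with h | h | h
      · exact h.1
      · exfalso
        exact hnot (Or.inr (Or.inl ⟨h.1, by
          simp only [nrow, ncol, ncomp] at h ⊢; omega⟩))
      · exact h.2.1
    · rcases hmem with h | h | h
      · have h2 : ¬ l.Mem (a, b+1, c) := fun hm => hnot (Or.inl hm)
        simp only [Bipartition.Mem, nrow, ncol, ncomp] at h h2 ⊢
        have : b = l.p c a := by omega
        simp [this]
      · exfalso
        exact hnot (Or.inr (Or.inl ⟨h.1, by
          simp only [nrow, ncol, ncomp] at h ⊢; omega⟩))
      · simp only [nrow, ncol, ncomp] at h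
        have : b = l.p c a := by omega
        simp [this]
  · rintro ⟨a', c', ha', heq⟩
    obtain ⟨rfl, rfl, rfl⟩ : a = a' ∧ b = l.p c' a' ∧ c = c' := by
      simpa [Prod.ext_iff] using heq
    constructor
    · by_cases hz : l.p c a = 0
      · exact Or.inr (Or.inr ⟨by simp [ncol, hz], by simpa [nrow], by simp [ncomp, nrow, hz]⟩)
      · exact Or.inl ⟨by simpa [nrow], by simp [ncol]; omega, by simp [ncol, ncomp, nrow]⟩
    · rintro (h | h | h)
      · simp only [Bipartition.Mem, nrow, ncol, ncomp] at h; omega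
      · simp only [nrow, ncol, ncomp] at h; omega
      · simp only [nrow, ncol, ncomp] at h; omega

lemma vb_node {l : Bipartition} {c : Fin 2} {a : ℕ} (ha : 1 ≤ a) :
    l.VertBoundary (a, l.p c a, c) := vb_iff.2 ⟨a, c, ha, rfl⟩

lemma cont_node {s : Fin 2 → ℤ} (a x : ℕ) (c : Fin 2) :
    cont s ((a, x, c) : UgNode) = (x : ℤ) - a + s c := rfl

lemma nlt_irrefl {s : Fin 2 → ℤ} (γ : UgNode) : ¬ nlt s γ γ := by
  rintro (h | ⟨_, h1, h2⟩)
  · omega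
  · rw [h1] at h2; exact absurd h2 (by decide)

lemma nlt_asymm {s : Fin 2 → ℤ} {γ η : UgNode} (h1 : nlt s γ η) (h2 : nlt s η γ) : False := by
  rcases h1 with h1 | ⟨e1, c1, c2⟩ <;> rcases h2 with h2 | ⟨e2, c3, c4⟩
  · omega
  · omega
  · omega
  · rw [c1] at c4; exact absurd c4 (by decide)

lemma nlt_trans {s : Fin 2 → ℤ} {x y z : UgNode} (h1 : nlt s x y) (h2 : nlt s y z) :
    nlt s x z := by
  rcases h1 with h1 | ⟨e1, c1, c2⟩ <;> rcases h2 with h2 | ⟨e2, c3, c4⟩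
  · exact Or.inl (lt_trans h1 h2)
  · exact Or.inl (by omega)
  · exact Or.inl (by omega)
  · rw [c2] at c3; exact absurd c3 (by decide)

section Seq
variable {s : Fin 2 → ℤ} {l : Bipartition} {g : ℕ → UgNode}

/-- contents function: content of the boundary node in row `a`, component `c`. -/
def cv (l : Bipartition) (s : Fin 2 → ℤ) (c : Fin 2) (a : ℕ) : ℤ :=
  (l.p c a : ℤ) - a + s c

lemma cont_vb_node {a : ℕ} {c : Fin 2} :
    cont s ((a, l.p c a, c) : UgNode) = cv l s c a := rfl

lemma cv_strictAnti {c : Fin 2} {a b : ℕ} (ha : 1 ≤ a) (hab : a < b) :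
    cv l s c b < cv l s c a := by
  have := l.anti c a b ha (le_of_lt hab)
  unfold cv; omega

lemma glt (hg : IsBoundarySeq s l g) {i j : ℕ} (hij : i < j) : nlt s (g j) (g i) := by
  induction j with
  | zero => omega
  | succ j ih =>
    rcases Nat.lt_succ_iff_lt_or_eq.1 hij with h | h
    · exact nlt_trans (hg.2.2 j) (ih h)
    · subst h; exact hg.2.2 i

lemma g_inj (hg : IsBoundarySeq s l g) {i j : ℕ} (h : g i = g j) : i = j := by
  rcases lt_trichotomy i j with hij | hij | hij
  · exact absurd (h ▸ glt hg hij) (nlt_irrefl _)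
  · exact hij
  · exact absurd (h ▸ glt hg hij) (nlt_irrefl _)

/-- every node strictly above (same comp, smaller row) a node of the sequence occurs earlier. -/
lemma row_earlier (hg : IsBoundarySeq s l g) {j a' : ℕ} {c : Fin 2}
    (ha1 : 1 ≤ a') (hcomp : ncomp (g j) = c) (hrow : a' < nrow (g j)) :
    ∃ i, i < j ∧ g i = (a', l.p c a', c) := by
  obtain ⟨i, hi⟩ := hg.2.1 _ (vb_node (l := l) (c := c) ha1)
  refine ⟨i, ?_, hi⟩
  obtain ⟨a, c', ha, hnode⟩ := vb_iff.1 (hg.1 j)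
  have hrow' : nrow (g j) = a := by rw [hnode]; rfl
  have hcomp' : ncomp (g j) = c' := by rw [hnode]; rfl
  have hcc : c' = c := by rw [← hcomp, hcomp']
  subst hcc
  rw [hrow'] at hrow
  rcases lt_trichotomy i j with h | h | h
  · exact h
  · exfalso; subst h
    rw [hi] at hnode
    have : a' = a := by
      have := congrArg nrow hnode; simpa [nrow] using this
    omega
  · exfalso
    have hlt := glt hg h
    rw [hi, hnode] at hlt
    have hanti := l.anti c' a' a ha1 (le_of_lt hrow)
    rcases hlt with hl | ⟨he, h1, h2⟩
    · simp only [cont_node] at hl; omega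
    · simp only [cont_node] at he; omega

/-- the frontier of component `c`: first row whose boundary node is not among `g 0 .. g (j-1)`. -/
lemma frontier (hg : IsBoundarySeq s l g) (j : ℕ) (c : Fin 2) :
    ∃ a : ℕ, 1 ≤ a ∧ (∀ i, i < j → g i ≠ (a, l.p c a, c)) ∧
      (∀ a', 1 ≤ a' → a' < a → ∃ i, i < j ∧ g i = (a', l.p c a', c)) := by
  have hex : ∃ a : ℕ, 1 ≤ a ∧ ∀ i, i < j → g i ≠ (a, l.p c a, c) := by
    rcases Nat.eq_zero_or_pos j with rfl | hj
    · exact ⟨1, le_refl 1, fun i hi => by omega⟩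
    · -- choose a with content below cont (g (j-1))
      set K : ℤ := (l.p c 1 : ℤ) + s c - cont s (g (j-1)) + 1 with hK
      refine ⟨max 1 K.toNat, le_max_left _ _, fun i hi hgi => ?_⟩
      set a := max 1 K.toNat with hadef
      have ha1 : 1 ≤ a := le_max_left _ _
      have haK : K ≤ (a : ℤ) := le_trans (Int.self_le_toNat K) (by exact_mod_cast le_max_right 1 K.toNat)
      have hcle : cont s (g i) ≥ cont s (g (j-1)) := by
        rcases Nat.lt_or_ge i (j-1) with h | h
        · rcases glt hg h with h' | ⟨h', _⟩
          · omega
          · omega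
        · have : i = j - 1 := by omega
          rw [this]
      rw [hgi, cont_vb_node] at hcle
      have hple : l.p c a ≤ l.p c 1 := l.anti c 1 a (le_refl 1) ha1
      unfold cv at hcle
      omega
  obtain ⟨a0, ha0⟩ := hex
  have H := Nat.find_spec (⟨a0, ha0⟩ : ∃ a, 1 ≤ a ∧ ∀ i, i < j → g i ≠ (a, l.p c a, c))
  refine ⟨_, H.1, H.2, fun a' h1 h2 => ?_⟩
  have := Nat.find_min (⟨a0, ha0⟩ : ∃ a, 1 ≤ a ∧ ∀ i, i < j → g i ≠ (a, l.p c a, c)) h2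
  push_neg at this
  obtain ⟨i, hi, hgi⟩ := this h1
  exact ⟨i, hi, hgi⟩

end Seq

section Seq2
variable {s : Fin 2 → ℤ} {l m : Bipartition} {g h : ℕ → UgNode}

lemma vb_col {a x : ℕ} {c : Fin 2} (hvb : l.VertBoundary (a, x, c)) :
    x = l.p c a ∧ 1 ≤ a := by
  obtain ⟨a', c', h1, h2⟩ := vb_iff.1 hvb
  obtain ⟨rfl, rfl, rfl⟩ : a = a' ∧ x = l.p c' a' ∧ c = c' := by
    simpa [Prod.ext_iff] using h2
  exact ⟨rfl, h1⟩

lemma seq_unique (hg : IsBoundarySeq s l g) (hg' : IsBoundarySeq s l h) : g = h := by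
  funext i
  induction i using Nat.strong_induction_on with
  | _ i ih =>
    by_contra hne
    obtain ⟨t, ht⟩ := hg'.2.1 _ (hg.1 i)
    have hti : i < t := by
      rcases lt_trichotomy t i with h1 | h1 | h1
      · exact absurd (g_inj hg ((ih t h1).trans ht)) (by omega)
      · exact absurd ((h1 ▸ ht).symm) hne
      · exact h1
    obtain ⟨u, hu⟩ := hg.2.1 _ (hg'.1 i)
    have hui : i < u := by
      rcases lt_trichotomy u i with h1 | h1 | h1
      · exact absurd (g_inj hg' ((hu.symm.trans (ih u h1)).symm)) (by omega)
      · exact absurd (h1 ▸ hu) hne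
      · exact h1
    exact nlt_asymm (ht ▸ glt hg' hti) (hu ▸ glt hg hui)

lemma bp_eq_of_seq (hg : IsBoundarySeq s l g) (hh : IsBoundarySeq s m g) : l = m := by
  apply bp_ext
  intro c a
  rcases Nat.eq_zero_or_pos a with rfl | ha
  · rw [l.p_zero, m.p_zero]
  · obtain ⟨i, hi⟩ := hg.2.1 _ (vb_node (l := l) (c := c) ha)
    have := vb_col (hi ▸ hh.1 i)
    exact this.1

/-- rows and cols of a term of a boundary sequence -/
lemma g_struct (hg : IsBoundarySeq s l g) (i : ℕ) :
    g i = (nrow (g i), l.p (ncomp (g i)) (nrow (g i)), ncomp (g i)) ∧ 1 ≤ nrow (g i) := by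
  obtain ⟨a, c, ha, hnode⟩ := vb_iff.1 (hg.1 i)
  constructor
  · rw [hnode]; rfl
  · rw [hnode]; exact ha

end Seq2

section EX
variable (s : Fin 2 → ℤ) (l : Bipartition)

def stp (q : ℕ × ℕ) : ℕ × ℕ :=
  if cv l s 1 (q.2+1) ≤ cv l s 0 (q.1+1) then (q.1+1, q.2) else (q.1, q.2+1)

def stt (i : ℕ) : ℕ × ℕ := (stp s l)^[i] (0,0)

def GG (i : ℕ) : UgNode :=
  if cv l s 1 ((stt s l i).2+1) ≤ cv l s 0 ((stt s l i).1+1)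
  then ((stt s l i).1+1, l.p 0 ((stt s l i).1+1), 0)
  else ((stt s l i).2+1, l.p 1 ((stt s l i).2+1), 1)

lemma stt_zero : stt s l 0 = (0, 0) := rfl

lemma stt_succ (i : ℕ) : stt s l (i+1) = stp s l (stt s l i) :=
  Function.iterate_succ_apply' _ _ _

lemma stepG (i : ℕ) :
    (cv l s 1 ((stt s l i).2+1) ≤ cv l s 0 ((stt s l i).1+1) ∧
      stt s l (i+1) = ((stt s l i).1+1, (stt s l i).2) ∧
      GG s l i = ((stt s l i).1+1, l.p 0 ((stt s l i).1+1), 0)) ∨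
    (cv l s 0 ((stt s l i).1+1) < cv l s 1 ((stt s l i).2+1) ∧
      stt s l (i+1) = ((stt s l i).1, (stt s l i).2+1) ∧
      GG s l i = ((stt s l i).2+1, l.p 1 ((stt s l i).2+1), 1)) := by
  rw [stt_succ]; unfold GG stp
  by_cases h : cv l s 1 ((stt s l i).2+1) ≤ cv l s 0 ((stt s l i).1+1)
  · exact Or.inl ⟨h, by rw [if_pos h], by rw [if_pos h]⟩
  · exact Or.inr ⟨lt_of_not_ge h, by rw [if_neg h], by rw [if_neg h]⟩

lemma stt_sum (i : ℕ) : (stt s l i).1 + (stt s l i).2 = i := by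
  induction i with
  | zero => rfl
  | succ i ih =>
    rcases stepG s l i with ⟨_, h2, _⟩ | ⟨_, h2, _⟩ <;> rw [h2] <;> simp <;> omega

lemma stt_fst_succ (i : ℕ) :
    ((stt s l (i+1)).1 = (stt s l i).1 + 1 ∧ (stt s l (i+1)).2 = (stt s l i).2) ∨
    ((stt s l (i+1)).1 = (stt s l i).1 ∧ (stt s l (i+1)).2 = (stt s l i).2 + 1) := by
  rcases stepG s l i with ⟨_, h2, _⟩ | ⟨_, h2, _⟩ <;> rw [h2] <;> simp

lemma stt_fst_mono : Monotone (fun i => (stt s l i).1) := by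
  apply monotone_nat_of_le_succ
  intro i
  rcases stt_fst_succ s l i with ⟨h, _⟩ | ⟨h, _⟩ <;> omega

lemma stt_snd_mono : Monotone (fun i => (stt s l i).2) := by
  apply monotone_nat_of_le_succ
  intro i
  rcases stt_fst_succ s l i with ⟨_, h⟩ | ⟨_, h⟩ <;> omega

lemma GG_vb (i : ℕ) : l.VertBoundary (GG s l i) := by
  rcases stepG s l i with ⟨_, _, h3⟩ | ⟨_, _, h3⟩ <;> rw [h3] <;>
    exact vb_node (by omega)

lemma GG_dec (i : ℕ) : nlt s (GG s l (i+1)) (GG s l i) := by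
  rcases stepG s l i with ⟨h1, h2, h3⟩ | ⟨h1, h2, h3⟩ <;>
    rcases stepG s l (i+1) with ⟨g1, g2, g3⟩ | ⟨g1, g2, g3⟩ <;>
    rw [h2] at g1 g3 <;> simp only [] at g1 g3 <;> rw [h3, g3]
  · -- TT
    left
    simp only [cont_vb_node]
    exact cv_strictAnti (by omega) (by omega)
  · -- TF
    rcases lt_or_eq_of_le h1 with h | h
    · exact Or.inl h
    · exact Or.inr ⟨h, rfl, rfl⟩
  · -- FT
    exact Or.inl h1
  · -- FF
    left
    simp only [cont_vb_node]
    exact cv_strictAnti (by omega) (by omega)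

lemma exists_right_step (a t : ℕ) (hbd : ∀ i, (stt s l i).1 < a) :
    ∃ k, t ≤ k ∧ cv l s 0 ((stt s l k).1+1) < cv l s 1 ((stt s l k).2+1) := by
  by_contra hc
  push_neg at hc
  have hgrow : ∀ d : ℕ, (stt s l (t+d)).1 = (stt s l t).1 + d := by
    intro d
    induction d with
    | zero => rfl
    | succ d ih =>
      rcases stepG s l (t+d) with ⟨h1, h2, _⟩ | ⟨h1, _, _⟩
      · rw [show t + (d+1) = (t+d)+1 by omega, h2]; simp [ih]; omega
      · exact absurd (hc (t+d) (by omega)) (not_le.2 h1)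
  have := hgrow a
  have := hbd (t + a)
  omega

lemma exists_left_step (a t : ℕ) (hbd : ∀ i, (stt s l i).2 < a) :
    ∃ k, t ≤ k ∧ cv l s 1 ((stt s l k).2+1) ≤ cv l s 0 ((stt s l k).1+1) := by
  by_contra hc
  push_neg at hc
  have hgrow : ∀ d : ℕ, (stt s l (t+d)).2 = (stt s l t).2 + d := by
    intro d
    induction d with
    | zero => rfl
    | succ d ih =>
      rcases stepG s l (t+d) with ⟨h1, _, _⟩ | ⟨h1, h2, _⟩
      · exact absurd h1 (not_le.2 (hc (t+d) (by omega)))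
      · rw [show t + (d+1) = (t+d)+1 by omega, h2]; simp [ih]; omega
  have := hgrow a
  have := hbd (t + a)
  omega

lemma GG_surj0 (a : ℕ) (ha : 1 ≤ a) : ∃ i, GG s l i = (a, l.p 0 a, 0) := by
  by_cases hex : ∃ i, a ≤ (stt s l i).1
  · have hi := Nat.find_spec hex
    have hi0 : Nat.find hex ≠ 0 := by
      intro h; rw [h, stt_zero] at hi; omega
    obtain ⟨k, hk1⟩ : ∃ k, Nat.find hex = k + 1 := ⟨Nat.find hex - 1, by omega⟩
    rw [hk1] at hi
    have hk : (stt s l k).1 < a := by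
      by_contra h
      exact Nat.find_min hex (by omega) (le_of_not_gt h)
    rcases stepG s l k with ⟨h1, h2, h3⟩ | ⟨h1, h2, h3⟩
    · rw [h2] at hi; simp only [] at hi
      have : (stt s l k).1 + 1 = a := by omega
      rw [this] at h3
      exact ⟨k, h3⟩
    · rw [h2] at hi; simp only [] at hi; omega
  · push_neg at hex
    exfalso
    set B : ℕ := ((l.p 1 1 : ℤ) + s 1 - s 0 + a).toNat with hBdef
    obtain ⟨k, hk, hcv⟩ := exists_right_step s l a (B + a) hex
    have hfst : (stt s l k).1 < a := hex k
    have hsum := stt_sum s l k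
    have hsnd : B + 1 ≤ (stt s l k).2 := by omega
    have hanti : (l.p 1 ((stt s l k).2 + 1) : ℤ) ≤ (l.p 1 1 : ℤ) := by
      exact_mod_cast l.anti 1 1 _ (le_refl 1) (by omega)
    have hB : (l.p 1 1 : ℤ) + s 1 - s 0 + a ≤ (B : ℤ) := Int.self_le_toNat _
    unfold cv at hcv
    have hp0 : (0:ℤ) ≤ (l.p 0 ((stt s l k).1 + 1) : ℤ) := by positivity
    omega

lemma GG_surj1 (a : ℕ) (ha : 1 ≤ a) : ∃ i, GG s l i = (a, l.p 1 a, 1) := by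
  by_cases hex : ∃ i, a ≤ (stt s l i).2
  · have hi := Nat.find_spec hex
    have hi0 : Nat.find hex ≠ 0 := by
      intro h; rw [h, stt_zero] at hi; omega
    obtain ⟨k, hk1⟩ : ∃ k, Nat.find hex = k + 1 := ⟨Nat.find hex - 1, by omega⟩
    rw [hk1] at hi
    have hk : (stt s l k).2 < a := by
      by_contra h
      exact Nat.find_min hex (by omega) (le_of_not_gt h)
    rcases stepG s l k with ⟨h1, h2, h3⟩ | ⟨h1, h2, h3⟩
    · rw [h2] at hi; simp only [] at hi; omega
    · rw [h2] at hi; simp only [] at hi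
      have : (stt s l k).2 + 1 = a := by omega
      rw [this] at h3
      exact ⟨k, h3⟩
  · push_neg at hex
    exfalso
    set B : ℕ := ((l.p 0 1 : ℤ) + s 0 - s 1 + a).toNat with hBdef
    obtain ⟨k, hk, hcv⟩ := exists_left_step s l a (B + a) hex
    have hsnd : (stt s l k).2 < a := hex k
    have hsum := stt_sum s l k
    have hfst : B + 1 ≤ (stt s l k).1 := by omega
    have hanti : (l.p 0 ((stt s l k).1 + 1) : ℤ) ≤ (l.p 0 1 : ℤ) := by
      exact_mod_cast l.anti 0 1 _ (le_refl 1) (by omega)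
    have hB : (l.p 0 1 : ℤ) + s 0 - s 1 + a ≤ (B : ℤ) := Int.self_le_toNat _
    unfold cv at hcv
    have hp1 : (0:ℤ) ≤ (l.p 1 ((stt s l k).2 + 1) : ℤ) := by positivity
    omega

lemma seq_exists : ∃ g, IsBoundarySeq s l g := by
  refine ⟨GG s l, fun i => GG_vb s l i, ?_, fun i => GG_dec s l i⟩
  intro γ hγ
  obtain ⟨a, c, ha, rfl⟩ := vb_iff.1 hγ
  fin_cases c
  · exact GG_surj0 s l a ha
  · exact GG_surj1 s l a ha

end EX

lemma rank_bound {l : Bipartition} {n r b : ℕ} (hl : l.rank = n) (hb : 1 ≤ b)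
    (hr : ∀ i, 1 ≤ i → i ≤ r → 1 ≤ l.p 0 i) : r + l.p 1 b ≤ n := by
  obtain ⟨N0, hN0⟩ := l.fin 0
  obtain ⟨N1, hN1⟩ := l.fin 1
  set N := max (max N0 N1) (max (r+1) (b+1)) with hN
  have hrank : l.rank = ∑ a ∈ Finset.range N, (l.p 0 a + l.p 1 a) := by
    apply tsum_eq_sum
    intro x hx
    have hxN : N ≤ x := by simpa using hx
    rw [hN0 x (by omega), hN1 x (by omega)]
    rfl
  have h1 : l.p 1 b ≤ ∑ a ∈ Finset.range N, l.p 1 a :=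
    Finset.single_le_sum (fun i _ => Nat.zero_le _) (Finset.mem_range.2 (by omega))
  have h2 : r ≤ ∑ a ∈ Finset.range N, l.p 0 a := by
    calc r = (Finset.Icc 1 r).card • 1 := by simp
    _ ≤ ∑ a ∈ Finset.Icc 1 r, l.p 0 a := by
        apply Finset.card_nsmul_le_sum
        intro x hx
        have := Finset.mem_Icc.1 hx
        exact hr x this.1 this.2
    _ ≤ ∑ a ∈ Finset.range N, l.p 0 a := by
        apply Finset.sum_le_sum_of_subset
        intro x hx
        have := Finset.mem_Icc.1 hx
        exact Finset.mem_range.2 (by omega)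
  rw [hrank, Finset.sum_add_distrib] at hl
  omega

lemma lemX {n : ℕ} {s : Fin 2 → ℤ} (hs : s 0 - s 1 > (n : ℤ) - 1) {x : Bipartition}
    (hx : x.rank = n) {a b : ℕ} (hb : 1 ≤ b)
    (hlt : (x.p 0 a : ℤ) - a + s 0 < (x.p 1 b : ℤ) - b + s 1)
    {r : ℕ} (hr : a ≤ r + b) : x.p 0 r = 0 := by
  by_contra hne
  have hr1 : 1 ≤ r := by
    rcases Nat.eq_zero_or_pos r with rfl | h
    · exact absurd (x.p_zero 0) hne
    · exact h
  have hpos : ∀ i, 1 ≤ i → i ≤ r → 1 ≤ x.p 0 i := by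
    intro i h1 h2
    have := x.anti 0 i r h1 h2
    omega
  have hrb := rank_bound hx hb hpos
  have h0 : (0:ℤ) ≤ (x.p 0 a : ℤ) := by positivity
  have hcast : (r : ℤ) + (x.p 1 b : ℤ) ≤ (n : ℤ) := by exact_mod_cast hrb
  omega

lemma bplex_asymm {l m : Bipartition} (hne : l ≠ m) (h1 : bplex l m) (h2 : bplex m l) :
    False := by
  rcases h1 with h1 | ⟨j, hj1, hj2, hj3⟩ | ⟨hall, j, hj1, hj2, hj3⟩ <;>
    rcases h2 with h2 | ⟨j', hj1', hj2', hj3'⟩ | ⟨hall', j', hj1', hj2', hj3'⟩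
  · exact hne h1
  · exact hne h1
  · exact hne h1
  · exact hne h2.symm
  · rcases lt_trichotomy j j' with h | h | h
    · have := hj2' j hj1 h; omega
    · subst h; omega
    · have := hj2 j' hj1' h; omega
  · have := hall' j; omega
  · exact hne h2.symm
  · have := hall j'; omega
  · rcases lt_trichotomy j j' with h | h | h
    · have := hj2' j hj1 h; omega
    · subst h; omega
    · have := hj2 j' hj1' h; omega

section Main
variable {s : Fin 2 → ℤ} {l m : Bipartition} {g h : ℕ → UgNode}

lemma frontier_sync (hg : IsBoundarySeq s l g) (hh : IsBoundarySeq s m h)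
    {j : ℕ} (hpre : ∀ i, i < j → g i = h i) (c : Fin 2) :
    ∃ a, 1 ≤ a ∧ (∀ i, i < j → g i ≠ (a, l.p c a, c)) ∧
      (∀ i, i < j → h i ≠ (a, m.p c a, c)) ∧
      (∀ a', 1 ≤ a' → a' < a →
        (∃ i, i < j ∧ g i = (a', l.p c a', c)) ∧
        (∃ i, i < j ∧ h i = (a', m.p c a', c)) ∧ l.p c a' = m.p c a') := by
  obtain ⟨a, ha1, haP, haQ⟩ := frontier hg j c
  refine ⟨a, ha1, haP, ?_, ?_⟩
  · intro i hi hnode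
    have hgi : g i = (a, m.p c a, c) := (hpre i hi).symm ▸ hnode
    have := vb_col (hgi ▸ hg.1 i)
    exact haP i hi (by rw [hgi, ← this.1])
  · intro a' h1 h2
    obtain ⟨i, hi, hgi⟩ := haQ a' h1 h2
    have hhi : h i = (a', l.p c a', c) := (hpre i hi) ▸ hgi
    have := vb_col (hhi ▸ hh.1 i)
    exact ⟨⟨i, hi, hgi⟩, ⟨i, hi, by rw [hhi, this.1]⟩, this.1⟩

lemma gj_row (hg : IsBoundarySeq s l g) {j a : ℕ} {c : Fin 2}
    (ha1 : 1 ≤ a)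
    (hnotin : ∀ i, i < j → g i ≠ (a, l.p c a, c))
    (hin : ∀ a', 1 ≤ a' → a' < a → ∃ i, i < j ∧ g i = (a', l.p c a', c))
    (hcomp : ncomp (g j) = c) : g j = (a, l.p c a, c) := by
  obtain ⟨hstruct, hrow1⟩ := g_struct hg j
  rw [hcomp] at hstruct
  rcases lt_trichotomy (nrow (g j)) a with hr | hr | hr
  · obtain ⟨i, hi, hgi⟩ := hin _ hrow1 hr
    exact absurd (g_inj hg (hgi.trans hstruct.symm)) (by omega)
  · rw [hr] at hstruct; exact hstruct
  · obtain ⟨i, hi, hgi⟩ := row_earlier hg ha1 hcomp hr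
    exact absurd hgi (hnotin i hi)

lemma gj_oth (hg : IsBoundarySeq s l g) {j a : ℕ} {c : Fin 2}
    (ha1 : 1 ≤ a)
    (hnotin : ∀ i, i < j → g i ≠ (a, l.p c a, c))
    (hcomp : ncomp (g j) ≠ c) : nlt s ((a, l.p c a, c) : UgNode) (g j) := by
  obtain ⟨i, hi⟩ := hg.2.1 _ (vb_node (l := l) (c := c) ha1)
  rcases lt_trichotomy i j with hij | hij | hij
  · exact absurd hi (hnotin i hij)
  · exact absurd (by rw [← hij, hi]; rfl) hcomp
  · exact hi ▸ glt hg hij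

lemma main_lemma {n : ℕ} (hs : s 0 - s 1 > (n : ℤ) - 1)
    (hl : l.rank = n) (hm : m.rank = n)
    (hg : IsBoundarySeq s l g) (hh : IsBoundarySeq s m h)
    {j : ℕ} (hpre : ∀ i, i < j → g i = h i) (hnlt : nlt s (g j) (h j)) :
    bplex l m := by
  obtain ⟨a, ha1, hgaP, hhaP, haQ⟩ := frontier_sync hg hh hpre 0
  obtain ⟨b, hb1, hgbP, hhbP, hbQ⟩ := frontier_sync hg hh hpre 1
  have hpre' : ∀ i, i < j → h i = g i := fun i hi => (hpre i hi).symm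
  have F0 : ∀ i, 1 ≤ i → i < a → l.p 0 i = m.p 0 i := fun i h1 h2 => (haQ i h1 h2).2.2
  have F1 : ∀ i, 1 ≤ i → i < b → l.p 1 i = m.p 1 i := fun i h1 h2 => (hbQ i h1 h2).2.2
  have h2cases : ∀ c : Fin 2, c = 0 ∨ c = 1 := by decide
  rcases h2cases (ncomp (g j)) with hcg | hcg <;> rcases h2cases (ncomp (h j)) with hch | hch
  · -- case (0,0)
    have hgj := gj_row hg ha1 hgaP (fun a' ha' hlt => (haQ a' ha' hlt).1) hcg
    have hhj := gj_row hh ha1 hhaP (fun a' ha' hlt => (haQ a' ha' hlt).2.1) hch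
    rw [hgj, hhj] at hnlt
    have hplt : l.p 0 a < m.p 0 a := by
      rcases hnlt with hc | ⟨_, hc, _⟩
      · simp only [cont_node] at hc; omega
      · exact absurd hc (by simp [ncomp])
    exact Or.inr (Or.inl ⟨a, ha1, F0, hplt⟩)
  · -- case (0,1)
    have hgj := gj_row hg ha1 hgaP (fun a' ha' hlt => (haQ a' ha' hlt).1) hcg
    have hhj := gj_row hh hb1 hhbP (fun a' ha' hlt => (hbQ a' ha' hlt).2.1) hch
    rw [hgj, hhj] at hnlt
    have hlt1 : (l.p 0 a : ℤ) - a + s 0 < (m.p 1 b : ℤ) - b + s 1 := by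
      rcases hnlt with hc | ⟨_, hc, _⟩
      · simpa only [cont_node] using hc
      · exact absurd hc (by simp [ncomp])
    have hXm : (m.p 0 a : ℤ) - a + s 0 < (m.p 1 b : ℤ) - b + s 1 := by
      have := gj_oth hh ha1 hhaP (by rw [hch]; decide)
      rw [hhj] at this
      rcases this with hc | ⟨_, hc, _⟩
      · simpa only [cont_node] using hc
      · exact absurd hc (by simp [ncomp])
    have hma : m.p 0 a = 0 := lemX hs hm hb1 hXm (by omega)
    by_cases hla : l.p 0 a = 0
    · -- comp-0 parts all equal; compare comp 1 at row b
      have pall0 : ∀ i, l.p 0 i = m.p 0 i := by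
        intro i
        rcases Nat.eq_zero_or_pos i with rfl | hi1
        · rw [l.p_zero, m.p_zero]
        · rcases lt_or_ge i a with hia | hia
          · exact F0 i hi1 hia
          · have h1 := l.anti 0 a i ha1 hia
            have h2 := m.anti 0 a i ha1 hia
            omega
      have hBA : (l.p 1 b : ℤ) - b + s 1 ≤ (l.p 0 a : ℤ) - a + s 0 := by
        have := gj_oth hg hb1 hgbP (by rw [hcg]; decide)
        rw [hgj] at this
        rcases this with hc | ⟨hc, _, _⟩
        · simp only [cont_node] at hc; omega
        · simp only [cont_node] at hc; omega
      have hplt : l.p 1 b < m.p 1 b := by omega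
      exact Or.inr (Or.inr ⟨pall0, b, hb1, F1, hplt⟩)
    · -- l.p 0 a ≥ 1 : contradiction
      exfalso
      have hrb : (a - 1) + m.p 1 b ≤ n := by
        apply rank_bound hm hb1
        intro i h1 h2
        have := l.anti 0 i a h1 (by omega)
        have := F0 i h1 (by omega)
        omega
      omega
  · -- case (1,0)
    have hgj := gj_row hg hb1 hgbP (fun a' ha' hlt => (hbQ a' ha' hlt).1) hcg
    have hhj := gj_row hh ha1 hhaP (fun a' ha' hlt => (haQ a' ha' hlt).2.1) hch
    rw [hgj, hhj] at hnlt
    have hle : (l.p 1 b : ℤ) - b + s 1 ≤ (m.p 0 a : ℤ) - a + s 0 := by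
      rcases hnlt with hc | ⟨hc, _, _⟩
      · simp only [cont_node] at hc; omega
      · simp only [cont_node] at hc; omega
    have hXl : (l.p 0 a : ℤ) - a + s 0 < (l.p 1 b : ℤ) - b + s 1 := by
      have := gj_oth hg ha1 hgaP (by rw [hcg]; decide)
      rw [hgj] at this
      rcases this with hc | ⟨_, hc, _⟩
      · simpa only [cont_node] using hc
      · exact absurd hc (by simp [ncomp])
    have hla : l.p 0 a = 0 := lemX hs hl hb1 hXl (by omega)
    by_cases hma : m.p 0 a = 0
    · exfalso; omega
    · exact Or.inr (Or.inl ⟨a, ha1, F0, by omega⟩)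
  · -- case (1,1)
    have hgj := gj_row hg hb1 hgbP (fun a' ha' hlt => (hbQ a' ha' hlt).1) hcg
    have hhj := gj_row hh hb1 hhbP (fun a' ha' hlt => (hbQ a' ha' hlt).2.1) hch
    rw [hgj, hhj] at hnlt
    have hplt : l.p 1 b < m.p 1 b := by
      rcases hnlt with hc | ⟨_, _, hc⟩
      · simp only [cont_node] at hc; omega
      · exact absurd hc (by simp [ncomp])
    have hXl : (l.p 0 a : ℤ) - a + s 0 < (l.p 1 b : ℤ) - b + s 1 := by
      have := gj_oth hg ha1 hgaP (by rw [hcg]; decide)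
      rw [hgj] at this
      rcases this with hc | ⟨_, hc, _⟩
      · simpa only [cont_node] using hc
      · exact absurd hc (by simp [ncomp])
    have hXm : (m.p 0 a : ℤ) - a + s 0 < (m.p 1 b : ℤ) - b + s 1 := by
      have := gj_oth hh ha1 hhaP (by rw [hch]; decide)
      rw [hhj] at this
      rcases this with hc | ⟨_, hc, _⟩
      · simpa only [cont_node] using hc
      · exact absurd hc (by simp [ncomp])
    have pall0 : ∀ i, l.p 0 i = m.p 0 i := by
      intro i
      rcases Nat.eq_zero_or_pos i with rfl | hi1
      · rw [l.p_zero, m.p_zero]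
      · rcases lt_or_ge i a with hia | hia
        · exact F0 i hi1 hia
        · rw [lemX hs hl hb1 hXl (by omega : a ≤ i + b),
              lemX hs hm hb1 hXm (by omega : a ≤ i + b)]
    exact Or.inr (Or.inr ⟨pall0, b, hb1, F1, hplt⟩)

end Main

section Tot
variable {s : Fin 2 → ℤ} {l m : Bipartition} {g h : ℕ → UgNode}

lemma tot (hg : IsBoundarySeq s l g) (hh : IsBoundarySeq s m h) (hne : l ≠ m) :
    ∃ j, (∀ i, i < j → g i = h i) ∧ (nlt s (g j) (h j) ∨ nlt s (h j) (g j)) := by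
  have hex : ∃ j, g j ≠ h j := by
    by_contra hc
    push_neg at hc
    exact hne (bp_eq_of_seq hg ((funext hc : g = h) ▸ hh))
  have hj : g (Nat.find hex) ≠ h (Nat.find hex) := Nat.find_spec hex
  have hpre : ∀ i, i < Nat.find hex → g i = h i := by
    intro i hi
    have := Nat.find_min hex hi
    push_neg at this
    exact this
  refine ⟨Nat.find hex, hpre, ?_⟩
  set j := Nat.find hex with hjd
  have h2cases : ∀ c : Fin 2, c = 0 ∨ c = 1 := by decide
  have hcompcase : ∀ c : Fin 2, ncomp (g j) = c → ncomp (h j) = c →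
      nlt s (g j) (h j) ∨ nlt s (h j) (g j) := by
    intro c hcg hch
    obtain ⟨a, ha1, hgaP, hhaP, haQ⟩ := frontier_sync hg hh hpre c
    have hgj := gj_row hg ha1 hgaP (fun a' ha' hlt => (haQ a' ha' hlt).1) hcg
    have hhj := gj_row hh ha1 hhaP (fun a' ha' hlt => (haQ a' ha' hlt).2.1) hch
    have hcols : l.p c a ≠ m.p c a := by
      intro hco
      exact hj (by rw [hgj, hhj, hco])
    rw [hgj, hhj]
    rcases lt_or_ge (l.p c a) (m.p c a) with hco | hco
    · exact Or.inl (Or.inl (by simp only [cont_node]; omega))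
    · exact Or.inr (Or.inl (by simp only [cont_node]; omega))
  rcases h2cases (ncomp (g j)) with hcg | hcg <;> rcases h2cases (ncomp (h j)) with hch | hch
  · exact hcompcase 0 hcg hch
  · rcases lt_trichotomy (cont s (g j)) (cont s (h j)) with hc | hc | hc
    · exact Or.inl (Or.inl hc)
    · exact Or.inr (Or.inr ⟨hc.symm, hch, hcg⟩)
    · exact Or.inr (Or.inl hc)
  · rcases lt_trichotomy (cont s (g j)) (cont s (h j)) with hc | hc | hc
    · exact Or.inl (Or.inl hc)
    · exact Or.inl (Or.inr ⟨hc, hcg, hch⟩)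
    · exact Or.inr (Or.inl hc)
  · exact hcompcase 1 hcg hch

end Tot


end UgPf

open UgPf

/-- if `s₁ - s₂ > n - 1`, the boundary-sequence order `⪯ₛ` coincides
with the lexicographic order on bipartitions of rank `n`. -/
theorem stmt_0 (n : ℕ) (hn : 0 < n) (s : Fin 2 → ℤ) (hs : s 0 - s 1 > (n : ℤ) - 1)
    (l m : Bipartition) (hl : l.rank = n) (hm : m.rank = n) :
    ble s l m ↔ bplex l m := by
  constructor
  · intro hb
    rcases hb with rfl | hb
    · exact Or.inl rfl
    · obtain ⟨g, hg⟩ := seq_exists s l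
      obtain ⟨h, hh⟩ := seq_exists s m
      obtain ⟨j, hpre, hnlt⟩ := hb g h hg hh
      exact main_lemma hs hl hm hg hh hpre hnlt
  · intro hb
    by_cases hne : l = m
    · exact Or.inl hne
    · obtain ⟨g, hg⟩ := seq_exists s l
      obtain ⟨h, hh⟩ := seq_exists s m
      obtain ⟨j, hpre, hor⟩ := tot hg hh hne
      rcases hor with hor | hor
      · right
        intro g' h' hg' hh'
        rw [seq_unique hg' hg, seq_unique hh' hh]
        exact ⟨j, hpre, hor⟩
      · exact absurd hb (fun hb' => bplex_asymm hne hb'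
          (main_lemma hs hm hl hh hg (fun i hi => (hpre i hi).symm) hor))
end

section
/- Let λ be a bipartition, s ∈ ℤ², and c ∈ {1,2}. If the unique addable-or-boundary extended node of λ in component c with content j is addable (nature A), then the unique such node with content j-1 has nature B_v or R, and the unique such node with content j+1 has nature B_h or R. -/
/-- if the unique addable-or-boundary node of content `j` in component
`c` is addable, then the one of content `j-1` has nature `B_v` or `R`, and the one of
content `j+1` has nature `B_h` or `R`. -/
theorem stmt_3 (l : Bipartition) (s : Fin 2 → ℤ) (c : Fin 2) (j : ℤ)
    (γ γ' γ'' : UgNode)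
    (hγc : ncomp γ = c) (hγj : cont s γ = j) (hγ : l.Addable γ)
    (h'c : ncomp γ' = c) (h'j : cont s γ' = j - 1) (h' : l.Addable γ' ∨ l.Boundary γ')
    (h''c : ncomp γ'' = c) (h''j : cont s γ'' = j + 1)
    (h'' : l.Addable γ'' ∨ l.Boundary γ'') :
    (HasNature l γ' Nature.Bv ∨ HasNature l γ' Nature.R) ∧
      (HasNature l γ'' Nature.Bh ∨ HasNature l γ'' Nature.R) := by
  classical
  obtain ⟨a, b, c0⟩ := γ
  obtain ⟨a', b', c1⟩ := γ'
  obtain ⟨a'', b'', c2⟩ := γ''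
  simp only [ncomp] at hγc h'c h''c
  subst hγc; subst h'c; subst h''c
  obtain ⟨ha, hb, hprev⟩ := hγ
  simp only [nrow, ncol, ncomp, Prod.fst, Prod.snd] at ha hb hprev
  simp only [cont, nrow, ncol, ncomp] at hγj h'j h''j
  have hanti := l.anti c2
  -- content equations
  have hbz : (b : ℤ) = (l.p c2 a : ℤ) + 1 := by exact_mod_cast hb
  have hE' : (b' : ℤ) - a' = (l.p c2 a : ℤ) - a := by linarith
  have hE'' : (b'' : ℤ) - a'' = (l.p c2 a : ℤ) - a + 2 := by linarith
  -- key inequality from addability of γ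
  have hpr : a = 1 ∨ l.p c2 a + 1 ≤ l.p c2 (a - 1) := by
    rcases hprev with h | h
    · exact Or.inl h
    · exact Or.inr (by omega)
  have H1 : l.VertBoundary (a', b', c2) ∨ l.Removable (a', b', c2) := by
    rcases h' with hadd | hvert | hhor
    · -- γ' addable: impossible
      exfalso
      obtain ⟨ha1, hb1, hp1⟩ := hadd
      simp only [nrow, ncol, ncomp] at ha1 hb1 hp1
      rcases lt_trichotomy a' a with hlt | heq | hgt
      · have h2 : 2 ≤ a := by omega
        have hq1 : l.p c2 a + 1 ≤ l.p c2 (a - 1) := by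
          rcases hpr with h | h; · omega
          · exact h
        have hq2 : l.p c2 (a - 1) ≤ l.p c2 a' := hanti a' (a - 1) ha1 (by omega)
        omega
      · subst heq; omega
      · have ha2 : 2 ≤ a' := by omega
        have hq2 : l.p c2 (a' - 1) ≤ l.p c2 a := by
          have := hanti a (a' - 1) ha (by omega)
          omega
        rcases hp1 with h | h; · omega
        · omega
    · exact Or.inl hvert
    · obtain ⟨hmem, hnmem⟩ := hhor
      simp only [Bipartition.MemExt, Bipartition.Mem, nrow, ncol, ncomp] at hmem hnmem
      rcases hmem with ⟨h1, h2, h3⟩ | ⟨h1, h2⟩ | ⟨h1, h2, h3⟩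
      · -- real node on horizontal boundary
        have hq : l.p c2 (a' + 1) < b' := by
          by_contra hcon
          exact hnmem (Or.inl ⟨by omega, h2, by omega⟩)
        have hbq : b' = l.p c2 a' := by
          by_contra hne
          have hblt : b' < l.p c2 a' := lt_of_le_of_ne h3 hne
          rcases lt_trichotomy a' a with hlt | heq | hgt
          · have hq2 : l.p c2 a ≤ l.p c2 (a' + 1) := hanti (a' + 1) a (by omega) (by omega)
            omega
          · subst heq; omega
          · have hq2 : l.p c2 a' ≤ l.p c2 a := hanti a a' ha (by omega)
            omega
        exact Or.inr ⟨h1, h2, by simpa [nrow, ncol, ncomp] using hbq,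
          by simpa [nrow, ncol, ncomp, hbq] using hq⟩
      · -- virtual row-0 node: impossible
        exfalso
        have hq2 : l.p c2 a ≤ l.p c2 1 := hanti 1 a le_rfl ha
        omega
      · -- virtual col-0 node: vertical boundary
        refine Or.inl ⟨Or.inr (Or.inr ?_), ?_⟩
        · simp only [nrow, ncol, ncomp]; exact ⟨h1, h2, h3⟩
        · simp only [Bipartition.MemExt, Bipartition.Mem, nrow, ncol, ncomp]
          push_neg
          refine ⟨fun _ _ => by omega, fun h => by omega, fun h => by omega⟩
  have H2 : l.HorizBoundary (a'', b'', c2) ∨ l.Removable (a'', b'', c2) := by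
    rcases h'' with hadd | hvert | hhor
    · -- γ'' addable: impossible
      exfalso
      obtain ⟨ha1, hb1, hp1⟩ := hadd
      simp only [nrow, ncol, ncomp] at ha1 hb1 hp1
      rcases lt_trichotomy a'' a with hlt | heq | hgt
      · have h2 : 2 ≤ a := by omega
        have hq1 : l.p c2 a + 1 ≤ l.p c2 (a - 1) := by
          rcases hpr with h | h; · omega
          · exact h
        have hq2 : l.p c2 (a - 1) ≤ l.p c2 a'' := hanti a'' (a - 1) ha1 (by omega)
        omega
      · subst heq; omega
      · have hq2 : l.p c2 a'' ≤ l.p c2 a := hanti a a'' ha (by omega)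
        omega
    · obtain ⟨hmem, hnmem⟩ := hvert
      simp only [Bipartition.MemExt, Bipartition.Mem, nrow, ncol, ncomp] at hmem hnmem
      rcases hmem with ⟨h1, h2, h3⟩ | ⟨h1, h2⟩ | ⟨h1, h2, h3⟩
      · -- real node on vertical boundary
        have hbq : b'' = l.p c2 a'' := by
          by_contra hne
          exact hnmem (Or.inl ⟨h1, by omega, by omega⟩)
        have hq : l.p c2 (a'' + 1) < b'' := by
          by_contra hcon
          push_neg at hcon
          rcases lt_trichotomy a'' a with hlt | heq | hgt
          · have hA : 2 ≤ a := by omega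
            have hq1 : l.p c2 a + 1 ≤ l.p c2 (a - 1) := by
              rcases hpr with h | h; · omega
              · exact h
            have hq2 : l.p c2 (a - 1) ≤ l.p c2 a'' := hanti a'' (a - 1) h1 (by omega)
            have hq3 : b'' ≤ l.p c2 a + 1 := by omega
            have haa : a'' = a - 1 := by omega
            have : l.p c2 (a'' + 1) = l.p c2 a := by rw [haa]; congr 1; omega
            omega
          · subst heq; omega
          · have hq2 : l.p c2 a'' ≤ l.p c2 a := hanti a a'' ha (by omega)
            omega
        exact Or.inr ⟨h1, h2, by simpa [nrow, ncol, ncomp] using hbq,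
          by simpa [nrow, ncol, ncomp, hbq] using hq⟩
      · -- virtual row-0 node: cannot be on vertical boundary
        exfalso
        exact hnmem (Or.inr (Or.inl ⟨h1, by omega⟩))
      · -- virtual col-0 node: horizontal boundary
        refine Or.inl ⟨Or.inr (Or.inr ?_), ?_⟩
        · simp only [nrow, ncol, ncomp]; exact ⟨h1, h2, h3⟩
        · -- show ¬ MemExt (a''+1, 0, c2); need p c2 (a''+1) > 0
          have haa : (a'' : ℤ) = (a : ℤ) - l.p c2 a - 2 := by omega
          have hA3 : (l.p c2 a : ℤ) + 3 ≤ a := by omega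
          have hq1 : l.p c2 a + 1 ≤ l.p c2 (a - 1) := by
            rcases hpr with h | h; · omega
            · exact h
          have hq2 : l.p c2 (a - 1) ≤ l.p c2 (a'' + 1) :=
            hanti (a'' + 1) (a - 1) (by omega) (by omega)
          simp only [Bipartition.MemExt, Bipartition.Mem, nrow, ncol, ncomp]
          push_neg
          refine ⟨fun _ h => by omega, fun h => by omega, fun _ _ => by omega⟩
    · exact Or.inl hhor
  constructor
  · rcases H1 with hv | hr
    · by_cases hR : l.Removable (a', b', c2)
      · exact Or.inr hR
      · exact Or.inl ⟨hv, hR⟩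
    · exact Or.inr hr
  · rcases H2 with hh | hr
    · by_cases hR : l.Removable (a'', b'', c2)
      · exact Or.inr hR
      · exact Or.inl ⟨hh, hR⟩
    · exact Or.inr hr
end

section
/- Let λ be a bipartition, s ∈ ℤ², and c ∈ {1,2}. If the unique addable-or-boundary extended node of λ in component c with content j is removable (nature R), then the unique such node with content j-1 has nature B_h or A, and the unique such node with content j+1 has nature B_v or A. -/
/-- if the unique addable-or-boundary node of content `j` in component
`c` is removable, then the one of content `j-1` has nature `B_h` or `A`, and the one
of content `j+1` has nature `B_v` or `A`. -/
theorem stmt_4 (l : Bipartition) (s : Fin 2 → ℤ) (c : Fin 2) (j : ℤ)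
    (γ γ' γ'' : UgNode)
    (hγc : ncomp γ = c) (hγj : cont s γ = j) (hγ : l.Removable γ)
    (h'c : ncomp γ' = c) (h'j : cont s γ' = j - 1) (h' : l.Addable γ' ∨ l.Boundary γ')
    (h''c : ncomp γ'' = c) (h''j : cont s γ'' = j + 1)
    (h'' : l.Addable γ'' ∨ l.Boundary γ'') :
    (HasNature l γ' Nature.Bh ∨ HasNature l γ' Nature.A) ∧
      (HasNature l γ'' Nature.Bv ∨ HasNature l γ'' Nature.A) := by
  obtain ⟨a, b, c0⟩ := γ
  obtain ⟨a', b', c1⟩ := γ'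
  obtain ⟨a'', b'', c2⟩ := γ''
  simp only [ncomp] at hγc h'c h''c
  subst c0; subst c1; subst c2
  simp only [cont, ncomp, nrow, ncol] at hγj h'j h''j
  obtain ⟨ha, hb, hpb, hpa1⟩ := hγ
  simp only [Bipartition.Removable, nrow, ncol, ncomp] at ha hb hpb hpa1
  have hc' : (b' : ℤ) - a' = (b : ℤ) - a - 1 := by omega
  have hc'' : (b'' : ℤ) - a'' = (b : ℤ) - a + 1 := by omega
  -- no real node of content j-1 on the right edge
  have claim1 : ∀ x y : ℕ, 1 ≤ x → 1 ≤ y → (y : ℤ) - x = (b : ℤ) - a - 1 →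
      y ≠ l.p c x := by
    intro x y hx hy hxy hyp
    rcases le_or_gt x a with h | h
    · have := l.anti c x a hx h
      omega
    · have := l.anti c (a + 1) x (by omega) h
      omega
  have hmem' : l.MemExt (a', b', c) → 1 ≤ a' ∧ 1 ≤ b' ∧ b' < l.p c a' := by
    rintro (⟨h1, h2, h3⟩ | ⟨h0, hgt⟩ | ⟨h0, h1, h2⟩) <;>
      simp only [nrow, ncol, ncomp] at *
    · exact ⟨h1, h2, lt_of_le_of_ne h3 (claim1 a' b' h1 h2 hc')⟩
    · have := l.anti c 1 a (le_refl 1) ha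
      omega
    · have := l.anti c a' a h1 (by omega)
      omega
  have notrem' : ¬ l.Removable (a', b', c) := by
    rintro ⟨r1, r2, r3, r4⟩
    simp only [nrow, ncol, ncomp] at r1 r2 r3 r4
    exact claim1 a' b' r1 r2 hc' r3
  have goal1 : HasNature l (a', b', c) Nature.Bh ∨ HasNature l (a', b', c) Nature.A := by
    rcases h' with hadd | hbd
    · exact Or.inr hadd
    · left
      rcases hbd with ⟨hm, hnv⟩ | hh
      · exfalso
        obtain ⟨h1, h2, h3⟩ := hmem' hm
        exact hnv (Or.inl ⟨h1, Nat.succ_le_succ (Nat.zero_le _), h3⟩)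
      · exact ⟨hh, notrem'⟩
  -- content j+1 side
  have claim2 : ∀ x y : ℕ, 1 ≤ x → 1 ≤ y → (y : ℤ) - x = (b : ℤ) - a + 1 →
      y = l.p c x → l.p c (x + 1) < y → False := by
    intro x y hx hy hxy hyp hlt
    rcases le_or_gt a x with h | h
    · have := l.anti c a x ha h
      omega
    · have := l.anti c (x + 1) a (by omega) h
      omega
  have hmem'' : l.MemExt (a'', b'', c) → 1 ≤ a'' ∧ 1 ≤ b'' ∧ b'' ≤ l.p c a'' := by
    rintro (⟨h1, h2, h3⟩ | ⟨h0, hgt⟩ | ⟨h0, h1, h2⟩) <;>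
      simp only [nrow, ncol, ncomp] at *
    · exact ⟨h1, h2, h3⟩
    · have := l.anti c 1 a (le_refl 1) ha
      omega
    · have := l.anti c a'' a h1 (by omega)
      omega
  have notrem'' : ¬ l.Removable (a'', b'', c) := by
    rintro ⟨r1, r2, r3, r4⟩
    simp only [nrow, ncol, ncomp] at r1 r2 r3 r4
    exact claim2 a'' b'' r1 r2 hc'' r3 r4
  have claim3 : 1 ≤ a'' → 1 ≤ b'' → b'' ≤ l.p c a'' → l.p c (a'' + 1) < b'' →
      b'' = l.p c a'' := by
    intro h1 h2 h3 h4
    rcases le_or_gt a a'' with h | h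
    · have := l.anti c a a'' ha h
      omega
    · have := l.anti c (a'' + 1) a (by omega) h
      omega
  have goal2 : HasNature l (a'', b'', c) Nature.Bv ∨ HasNature l (a'', b'', c) Nature.A := by
    rcases h'' with hadd | hbd
    · exact Or.inr hadd
    · left
      rcases hbd with hv | ⟨hm, hnh⟩
      · exact ⟨hv, notrem''⟩
      · obtain ⟨h1, h2, h3⟩ := hmem'' hm
        have hnm : l.p c (a'' + 1) < b'' := by
          by_contra hle
          exact hnh (Or.inl ⟨Nat.succ_le_succ (Nat.zero_le _), h2,
            show b'' ≤ l.p c (a'' + 1) by omega⟩)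
        have heq := claim3 h1 h2 h3 hnm
        refine ⟨⟨hm, ?_⟩, notrem''⟩
        rintro (⟨m1, m2, m3⟩ | ⟨m0, _⟩ | ⟨m0, _, _⟩) <;>
          simp only [nrow, ncol, ncomp] at * <;> omega
  exact ⟨goal1, goal2⟩
end

section
/- Let e ≥ 2 and s = (s₁,s₂) ∈ ℤ². The map (λ¹,λ²) ↦ (λ²,λ¹) is a bijection between the Uglov bipartitions of rank n for (e, (s₁,s₂)) and the Uglov bipartitions of rank n for (e, (s₂, s₁+e)), i.e. for the multicharge τ·s where τ = σ₁y₁. -/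
namespace Stmt12Aux

/-- Swap the component of a node. -/
def swN (γ : UgNode) : UgNode := (γ.1, γ.2.1, 1 - γ.2.2)

lemma fin2 (c : Fin 2) : c = 0 ∨ c = 1 := by revert c; decide
lemma fin2_sub_sub (c : Fin 2) : 1 - (1 - c) = c := by revert c; decide
lemma fin2_sub_eq (c d : Fin 2) : 1 - c = d ↔ c = 1 - d := by revert c d; decide

@[simp] lemma swN_swN (γ : UgNode) : swN (swN γ) = γ := by
  obtain ⟨a, b, c⟩ := γ
  simp [swN, fin2_sub_sub]

@[simp] lemma nrow_swN (γ : UgNode) : nrow (swN γ) = nrow γ := rfl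
@[simp] lemma ncol_swN (γ : UgNode) : ncol (swN γ) = ncol γ := rfl
@[simp] lemma ncomp_swN (γ : UgNode) : ncomp (swN γ) = 1 - ncomp γ := rfl

lemma bp_ext {l m : Bipartition} (h : l.p = m.p) : l = m := by
  cases l; cases m; cases h; rfl

lemma swap_swap (l : Bipartition) : l.swap.swap = l :=
  bp_ext (funext fun c => by show l.p (1 - (1 - c)) = l.p c; rw [fin2_sub_sub])

lemma swap_empty : Bipartition.emptyBp.swap = Bipartition.emptyBp := bp_ext rfl

lemma addable_swap (l : Bipartition) (γ : UgNode) :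
    l.swap.Addable γ ↔ l.Addable (swN γ) := Iff.rfl

lemma removable_swap (l : Bipartition) (γ : UgNode) :
    l.swap.Removable γ ↔ l.Removable (swN γ) := Iff.rfl

lemma isAddOf_swap {m l : Bipartition} {γ : UgNode} (h : Bipartition.IsAddOf m l γ) :
    Bipartition.IsAddOf m.swap l.swap (swN γ) := by
  obtain ⟨ha, hp⟩ := h
  refine ⟨?_, fun c a => ?_⟩
  · rw [addable_swap, swN_swN]; exact ha
  · have h2 := hp (1 - c) a
    show l.p (1 - c) a = _
    rw [h2]
    simp only [ncomp_swN, nrow_swN, fin2_sub_eq]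
    rfl

/-- The map on letters of words. -/
def pmap (x : Letter × UgNode) : Letter × UgNode := (x.1, swN x.2)

@[simp] lemma pmap_pmap (x : Letter × UgNode) : pmap (pmap x) = x := by
  simp [pmap]

lemma map_pmap_invol (w : List (Letter × UgNode)) : (w.map pmap).map pmap = w := by
  rw [List.map_map]
  have : pmap ∘ pmap = id := funext fun x => pmap_pmap x
  rw [this, List.map_id]

lemma mem_map_pmap {x : Letter × UgNode} {w : List (Letter × UgNode)} :
    x ∈ w.map pmap ↔ pmap x ∈ w := by
  constructor
  · intro hx
    obtain ⟨y, hy, hyx⟩ := List.mem_map.mp hx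
    rw [← hyx, pmap_pmap]; exact hy
  · intro hx
    have := List.mem_map_of_mem (f := pmap) hx
    rwa [pmap_pmap] at this

lemma step_map {w w' : List (Letter × UgNode)} (h : Step w w') :
    Step (w.map pmap) (w'.map pmap) := by
  obtain ⟨xs, ys, γ, η, h1, h2⟩ := h
  exact ⟨xs.map pmap, ys.map pmap, swN γ, swN η, by simp [h1, pmap], by simp [h2]⟩

lemma rtg_map {w w' : List (Letter × UgNode)} (h : Relation.ReflTransGen Step w w') :
    Relation.ReflTransGen Step (w.map pmap) (w'.map pmap) := by
  induction h with
  | refl => exact Relation.ReflTransGen.refl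
  | tail _ h2 ih => exact ih.tail (step_map h2)

lemma reduced_map {w : List (Letter × UgNode)} (h : Reduced w) : Reduced (w.map pmap) := by
  intro v hv
  have := step_map hv
  rw [map_pmap_invol] at this
  exact h _ this

lemma step_mem {w w' : List (Letter × UgNode)} (h : Step w w') :
    ∀ x ∈ w', x ∈ w := by
  obtain ⟨xs, ys, γ, η, h1, h2⟩ := h
  intro x hx
  rw [h2, List.mem_append] at hx
  rw [h1, List.mem_append]
  rcases hx with hx | hx
  · exact Or.inl hx
  · exact Or.inr (by simp [hx])

lemma rtg_mem {w w' : List (Letter × UgNode)} (h : Relation.ReflTransGen Step w w') :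
    ∀ x ∈ w', x ∈ w := by
  induction h with
  | refl => exact fun x hx => hx
  | tail _ h2 ih => exact fun x hx => ih x (step_mem h2 x hx)

lemma chain'_mono {α : Type*} {R S : α → α → Prop} {P : α → Prop}
    (H : ∀ x y, P x → P y → R x y → S x y) :
    ∀ w : List α, (∀ x ∈ w, P x) → w.Chain' R → w.Chain' S := by
  intro w
  induction w with
  | nil => intro _ _; exact List.isChain_nil
  | cons x xs ih =>
    intro hp hc
    cases xs with
    | nil => exact List.isChain_singleton _
    | cons y ys =>
      simp only [List.Chain', List.isChain_cons_cons] at hc ⊢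
      exact ⟨H x y (hp x (by simp)) (hp y (by simp)) hc.1,
        ih (fun z hz => hp z (List.mem_cons_of_mem _ hz)) hc.2⟩

section Transfer

variable {e : ℕ} {s t δ : Fin 2 → ℤ}

lemma cont_swN (ht : ∀ c : Fin 2, t (1 - c) = s c + δ c) (γ : UgNode) :
    cont t (swN γ) = cont s γ + δ (ncomp γ) := by
  simp only [cont, nrow_swN, ncol_swN, ncomp_swN, ht]
  ring

lemma res_swN (ht : ∀ c : Fin 2, t (1 - c) = s c + δ c)
    (hdvd : ∀ c, (e : ℤ) ∣ δ c) (γ : UgNode) :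
    res e t (swN γ) = res e s γ := by
  unfold res
  rw [cont_swN ht]
  push_cast
  rw [(ZMod.intCast_zmod_eq_zero_iff_dvd _ _).mpr (hdvd (ncomp γ))]
  ring

lemma res_eq_dvd {γ η : UgNode} (hres : res e s γ = res e s η) :
    (e : ℤ) ∣ cont s η - cont s γ :=
  Int.ModEq.dvd ((ZMod.intCast_eq_intCast_iff _ _ _).mp hres)

lemma nlt_swN (he : 0 < e) (ht : ∀ c : Fin 2, t (1 - c) = s c + δ c)
    (hδ : δ 0 - δ 1 = (e : ℤ)) {γ η : UgNode}
    (hres : res e s γ = res e s η) (h : nlt s γ η) :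
    nlt t (swN γ) (swN η) := by
  obtain ⟨k, hk⟩ := res_eq_dvd hres
  have hcγ := cont_swN ht γ
  have hcη := cont_swN ht η
  rcases fin2 (ncomp γ) with hγ | hγ <;> rcases fin2 (ncomp η) with hη | hη
  · -- both component 0
    left
    rw [hcγ, hcη, hγ, hη]
    rcases h with h | ⟨_, h1, _⟩
    · omega
    · rw [hγ] at h1; exact absurd h1 (by decide)
  · -- γ comp 0, η comp 1
    rcases h with h | ⟨_, h1, _⟩
    swap
    · rw [hγ] at h1; exact absurd h1 (by decide)
    have h1 : 0 < (e : ℤ) * k := by rw [← hk]; omega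
    have hepos : (0 : ℤ) < (e : ℤ) := by exact_mod_cast he
    have hk1 : 1 ≤ k := by nlinarith
    have h2 : (e : ℤ) ≤ (e : ℤ) * k := by nlinarith
    have h3 : cont s γ + (e : ℤ) ≤ cont s η := by omega
    have hle : cont t (swN γ) ≤ cont t (swN η) := by
      rw [hcγ, hcη, hγ, hη]; omega
    rcases lt_or_eq_of_le hle with hlt | heq
    · exact Or.inl hlt
    · refine Or.inr ⟨heq, ?_, ?_⟩
      · rw [ncomp_swN, hγ]; decide
      · rw [ncomp_swN, hη]; decide
  · -- γ comp 1, η comp 0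
    left
    rw [hcγ, hcη, hγ, hη]
    rcases h with h | ⟨hc, _, _⟩
    · omega
    · rw [hc]; omega
  · -- both component 1
    left
    rw [hcγ, hcη, hγ, hη]
    rcases h with h | ⟨_, _, h2⟩
    · omega
    · rw [hη] at h2; exact absurd h2 (by decide)

lemma word_mem_res {j : ZMod e} {l : Bipartition} {w : List (Letter × UgNode)}
    (hw : IsSortedWord e s j l w) : ∀ x ∈ w, res e s x.2 = j := by
  rintro ⟨a, γ⟩ hx
  cases a with
  | A => exact (((hw.2 γ).1).mp hx).2
  | R => exact (((hw.2 γ).2).mp hx).2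

variable (he : 0 < e) (ht : ∀ c : Fin 2, t (1 - c) = s c + δ c)
  (hdvd : ∀ c, (e : ℤ) ∣ δ c) (hδ : δ 0 - δ 1 = (e : ℤ))

include he ht hdvd hδ

lemma sorted_map {j : ZMod e} {l : Bipartition} {w : List (Letter × UgNode)}
    (hw : IsSortedWord e s j l w) : IsSortedWord e t j l.swap (w.map pmap) := by
  constructor
  · simp only [List.Chain', List.isChain_map]
    exact chain'_mono
      (fun x y px py hxy => nlt_swN he ht hδ (px.trans py.symm) hxy)
      w (word_mem_res hw) hw.1
  · intro γ
    have hres : res e t (swN (swN γ)) = res e s (swN γ) := res_swN ht hdvd (swN γ)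
    rw [swN_swN] at hres
    constructor
    · rw [mem_map_pmap]
      show (Letter.A, swN γ) ∈ w ↔ _
      rw [(hw.2 (swN γ)).1]
      exact and_congr Iff.rfl (by rw [hres])
    · rw [mem_map_pmap]
      show (Letter.R, swN γ) ∈ w ↔ _
      rw [(hw.2 (swN γ)).2]
      exact and_congr Iff.rfl (by rw [hres])

lemma good_map {j : ZMod e} {m : Bipartition} {γ : UgNode}
    (h : GoodAddable e s j m γ) : GoodAddable e t j m.swap (swN γ) := by
  obtain ⟨w, w', hw, hst, hred, hmem, hmax⟩ := h
  refine ⟨w.map pmap, w'.map pmap, sorted_map he ht hdvd hδ hw, rtg_map hst,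
    reduced_map hred, ?_, ?_⟩
  · have : pmap (Letter.A, swN γ) = (Letter.A, γ) := by simp [pmap]
    rw [mem_map_pmap, this]
    exact hmem
  · intro η hη
    rw [mem_map_pmap] at hη
    have hη' : (Letter.A, swN η) ∈ w' := hη
    have hηw : (Letter.A, swN η) ∈ w := rtg_mem hst _ hη'
    have hγw : (Letter.A, γ) ∈ w := rtg_mem hst _ hmem
    have hresη : res e s (swN η) = j := word_mem_res hw _ hηw
    have hresγ : res e s γ = j := word_mem_res hw _ hγw
    rcases hmax (swN η) hη' with h1 | h2
    · left; rw [← h1, swN_swN]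
    · right
      have := nlt_swN he ht hδ (hresη.trans hresγ.symm) h2
      rwa [swN_swN] at this

lemma uglov_map : ∀ (n : ℕ) (l : Bipartition), IsUglov e s n l → IsUglov e t n l.swap := by
  intro n
  induction n with
  | zero =>
    intro l h
    show l.swap = Bipartition.emptyBp
    rw [show l = Bipartition.emptyBp from h, swap_empty]
  | succ n ih =>
    intro l h
    obtain ⟨m, γ, j, hm, hg, ha⟩ := h
    exact ⟨m.swap, swN γ, j, ih m hm, good_map he ht hdvd hδ hg, isAddOf_swap ha⟩

end Transfer

end Stmt12Aux

/-- `(λ¹,λ²) ↦ (λ²,λ¹)` is a bijection between Uglov bipartitions of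
rank `n` for `(e,(s₁,s₂))` and those for `(e, τ·s) = (e,(s₂, s₁+e))`. -/
theorem stmt_12 (e : ℕ) (he : 2 ≤ e) (s : Fin 2 → ℤ) (n : ℕ) (l : Bipartition) :
    IsUglov e s n l ↔
      IsUglov e (fun c => if c = 0 then s 1 else s 0 + (e : ℤ)) n l.swap := by
  open Stmt12Aux in
  have he0 : 0 < e := by omega
  have e10 : (1 - (0 : Fin 2)) = 1 := by decide
  have e11 : (1 - (1 : Fin 2)) = 0 := by decide
  set s' : Fin 2 → ℤ := fun c => if c = 0 then s 1 else s 0 + (e : ℤ) with hs'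
  constructor
  · intro h
    refine uglov_map (δ := fun c => if c = 0 then (e : ℤ) else 0) he0 ?_ ?_ ?_ n l h
    · intro c
      rcases fin2 c with rfl | rfl
      · rw [e10]; simp [hs']
      · rw [e11]; simp [hs']
    · intro c
      rcases fin2 c with rfl | rfl <;> simp
    · simp
  · intro h
    have := uglov_map (s := s') (t := s) (δ := fun c => if c = 0 then 0 else -(e : ℤ))
      he0 ?_ ?_ ?_ n l.swap h
    · rwa [swap_swap] at this
    · intro c
      rcases fin2 c with rfl | rfl
      · rw [e10]; simp [hs']
      · rw [e11]; simp [hs']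
    · intro c
      rcases fin2 c with rfl | rfl <;> simp
    · simp
end
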